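/- For each β ∈ {It, Sd}: there exists a class ℒ of recursive languages such that ℒ ∈ [τ(CInd)TxtβEx_C]_REC but ℒ ∉ [TxtTdEx_W]_REC; that is, some partial computable β-learner that outputs only C-indices on all inputs Ex_C-learns every member of ℒ, but no partial computable transductive learner Ex_W-learns every member of ℒ. -/

import Mathlib

namespace InductiveInference

/-- `φ_e` : the `e`-th partial computable function, via the standard numbering
of `Nat.Partrec.Code`. -/
def phi (e : ℕ) : ℕ →. ℕ := (Denumerable.ofNat Nat.Partrec.Code e).eval

/-- `W_e` : the domain of `φ_e`. -/
def Wset (e : ℕ) : Set ℕ := (phi e).Dom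

/-- `e` is a C-index: `φ_e` is total with values in `{0,1}`. -/
def CIndex (e : ℕ) : Prop := ∀ x, phi e x = Part.some 0 ∨ phi e x = Part.some 1

/-- `C_e = {x | φ_e x = 1}`. -/
def Cset (e : ℕ) : Set ℕ := {x | phi e x = Part.some 1}

/-- A language is recursive (decidable). -/
def RecLang (L : Set ℕ) : Prop := ∃ f : ℕ → Bool, Computable f ∧ ∀ x, x ∈ L ↔ f x = true

/-- Texts: total functions `ℕ → ℕ ∪ {#}`; `none` is the pause symbol `#`. -/
abbrev Text := ℕ → Option ℕ

/-- The content of a text: its range minus the pause symbol. -/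
def content (T : Text) : Set ℕ := {x | ∃ n, T n = some x}

/-- The initial segment `T[n] = (T 0, …, T (n-1))`. -/
def initSeg (T : Text) (n : ℕ) : List (Option ℕ) := (List.range n).map T

/-- The (finite) content of the initial segment `T[n]`. -/
def fincontent (T : Text) (n : ℕ) : Finset ℕ := ((initSeg T n).filterMap id).toFinset

/-- A canonical numerical code for a finite set of naturals. -/
def setCode (D : Finset ℕ) : ℕ := Encodable.encode (D.sort (· ≤ ·))

/-- Learners: partial functions on (suitably coded) natural number inputs. -/
abbrev Learner := ℕ →. ℕ

/-- The learner is partial computable. -/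
def PartComputable (h : Learner) : Prop := Nat.Partrec h

/-- The learner is total computable. -/
def TotalComputable (h : Learner) : Prop := Nat.Partrec h ∧ ∀ x, (h x).Dom

/-- Hypothesis sequences (possibly undefined at some points). -/
abbrev HypSeq := ℕ → Part ℕ

/-- Gold-style (full-information) learning: `G(h,T)(i) = h(T[i])`. -/
def Gop (h : Learner) (T : Text) (i : ℕ) : Part ℕ :=
  h (Encodable.encode (initSeg T i))

/-- Partially set-driven learning: `Psd(h,T)(i) = h(content T[i], i)`. -/
def Psdop (h : Learner) (T : Text) (i : ℕ) : Part ℕ :=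
  h (Nat.pair (setCode (fincontent T i)) i)

/-- Set-driven learning: `Sd(h,T)(i) = h(content T[i])`. -/
def Sdop (h : Learner) (T : Text) (i : ℕ) : Part ℕ :=
  h (setCode (fincontent T i))

/-- Iterative learning: the input `none` codes the empty start sequence `ε`,
and `some (e, x)` codes the pair of previous hypothesis `e` and datum `x`. -/
def Itop (h : Learner) (T : Text) : ℕ → Part ℕ
  | 0 => h (Encodable.encode (none : Option (ℕ × Option ℕ)))
  | i + 1 => (Itop h T i).bind fun e =>
      h (Encodable.encode (some (e, T i) : Option (ℕ × Option ℕ)))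

/-- Transductive learning: the learner receives the single (coded) datum
`T i`; the output `0` codes the distinguished symbol `?`, and the output
`e + 1` codes the hypothesis `e`.  The value `?` of the hypothesis sequence
is represented by `Part.none`. -/
def Tdop (h : Learner) (T : Text) : ℕ → Part ℕ
  | 0 => Part.none
  | i + 1 => (h (Encodable.encode (T i))).bind fun v =>
      match v with
      | 0 => Tdop h T i
      | e + 1 => Part.some e

/-- `Ex_C`: syntactic convergence to a single correct C-index. -/
def ExC (p : HypSeq) (T : Text) : Prop :=
  ∃ n₀, (∀ n, n₀ ≤ n → p n = p n₀) ∧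
    ∃ e, p n₀ = Part.some e ∧ CIndex e ∧ Cset e = content T

/-- `Ex_W`: syntactic convergence to a single correct W-index. -/
def ExW (p : HypSeq) (T : Text) : Prop :=
  ∃ n₀, (∀ n, n₀ ≤ n → p n = p n₀) ∧
    ∃ e, p n₀ = Part.some e ∧ Wset e = content T

/-- `Bc_C`: semantic convergence to correct C-indices. -/
def BcC (p : HypSeq) (T : Text) : Prop :=
  ∃ n₀, ∀ n, n₀ ≤ n → ∃ e, p n = Part.some e ∧ CIndex e ∧ Cset e = content T

/-- `Bc_W`: semantic convergence to correct W-indices. -/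
def BcW (p : HypSeq) (T : Text) : Prop :=
  ∃ n₀, ∀ n, n₀ ≤ n → ∃ e, p n = Part.some e ∧ Wset e = content T

/-- `CInd`: every hypothesis output is a C-index. -/
def CIndRes (p : HypSeq) (_T : Text) : Prop :=
  ∀ i e, p i = Part.some e → CIndex e

/-- `T`: the always-true restriction. -/
def TrueRes (_p : HypSeq) (_T : Text) : Prop := True

abbrev InteractionOp := Learner → Text → HypSeq
abbrev Restriction := HypSeq → Text → Prop

/-- Conjunction of restrictions. -/
def andRes (δ δ' : Restriction) : Restriction := fun p T => δ p T ∧ δ' p T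

/-- `h` `Txtβδ`-learns `L`: on every text for `L` the restriction `δ` holds. -/
def Learns (β : InteractionOp) (δ : Restriction) (h : Learner) (L : Set ℕ) : Prop :=
  ∀ T : Text, content T = L → δ (β h T) T

/-- The restriction `α` holds for `h` on all texts whatsoever. -/
def OnAllTexts (β : InteractionOp) (α : Restriction) (h : Learner) : Prop :=
  ∀ T : Text, α (β h T) T

/-- A class of recursive languages. -/
def IsRecClass (ℒ : Set (Set ℕ)) : Prop := ∀ L ∈ ℒ, RecLang L

/-- `[𝒞Txtβδ]_REC`: classes of recursive languages learnable by some
learner from `C` under interaction operator `β` and restriction `δ`. -/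
def LearnableREC (C : Learner → Prop) (β : InteractionOp) (δ : Restriction) :
    Set (Set (Set ℕ)) :=
  {ℒ | IsRecClass ℒ ∧ ∃ h, C h ∧ ∀ L ∈ ℒ, Learns β δ h L}

/-- `[τ(α)𝒞Txtβδ]_REC`: as above, where additionally `α` must hold on
arbitrary texts. -/
def TauLearnableREC (C : Learner → Prop) (α : Restriction) (β : InteractionOp)
    (δ : Restriction) : Set (Set (Set ℕ)) :=
  {ℒ | IsRecClass ℒ ∧ ∃ h, C h ∧ OnAllTexts β α h ∧ ∀ L ∈ ℒ, Learns β δ h L}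

/-!
The separating class is `{{0}, {1}, {0, 1}}`. A transductive learner sees a single datum
at a time, so on the constant texts for `{0}` and `{1}` it must commit, upon reading `0` resp.
`1`, to hypotheses `k₀ ≠ k₁`; on the alternating text `0, 1, 0, 1, …` for `{0, 1}` it then
changes its mind forever.

Conversely, let the guess after data `D` be `D` while `D ⊆ {0, 1}` and `{0, 1}` afterwards. Its
C-index depends only on the content seen, which gives a set-driven learner; the guess changes
only by inserting the new datum and takes four values, so it can also be updated iteratively
from the previous hypothesis.
-/

open Encodable

lemma exists_phi_eq_of_computable {f : ℕ → ℕ} (hf : Computable f) :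
    ∃ e, ∀ x, phi e x = Part.some (f x) := by
  obtain ⟨c, hc⟩ := Nat.Partrec.Code.exists_code.mp (Partrec.nat_iff.mp hf)
  exact ⟨encode c, fun x => by simp only [phi, Denumerable.ofNat_encode, hc]; rfl⟩

lemma exists_cIndex_of_computablePred {p : ℕ → Prop} (hp : ComputablePred p) :
    ∃ e, CIndex e ∧ Cset e = {x | p x} := by
  classical
  obtain ⟨_, hp⟩ := hp
  obtain ⟨e, he⟩ := exists_phi_eq_of_computable (f := fun x => if p x then 1 else 0)
    ((Computable.cond hp (.const 1) (.const 0)).of_eq fun x => by by_cases h : p x <;> simp [h])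
  refine ⟨e, fun x => ?_, Set.ext fun x => ?_⟩
  · by_cases h : p x <;> simp [he, h]
  · by_cases h : p x <;> simp [Cset, he, h]

lemma computablePred_mem_finset (D : Finset ℕ) : ComputablePred (· ∈ D) :=
  PrimrecPred.computablePred <| ((PrimrecRel.exists_mem_list Primrec.eq).comp
    (.const D.toList) .id).of_eq fun x => by simp

noncomputable def finsetIndex (D : Finset ℕ) : ℕ :=
  (exists_cIndex_of_computablePred (computablePred_mem_finset D)).choose

lemma cIndex_finsetIndex (D : Finset ℕ) : CIndex (finsetIndex D) :=
  (exists_cIndex_of_computablePred (computablePred_mem_finset D)).choose_spec.1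

lemma cset_finsetIndex (D : Finset ℕ) : Cset (finsetIndex D) = D :=
  (exists_cIndex_of_computablePred (computablePred_mem_finset D)).choose_spec.2

lemma finsetIndex_injective : Function.Injective finsetIndex := fun D D' h => by
  simpa [cset_finsetIndex] using congrArg Cset h

lemma mem_fincontent {T : Text} {n x : ℕ} :
    x ∈ fincontent T n ↔ ∃ m < n, T m = some x := by
  simp [fincontent, initSeg]

lemma fincontent_succ (T : Text) (n : ℕ) :
    fincontent T (n + 1) = fincontent T n ∪ (T n).toFinset := by
  ext x
  simp [fincontent, initSeg, List.range_succ, eq_comm]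

lemma eventually_fincontent_eq {T : Text} {D : Finset ℕ} (hT : content T = D) :
    ∃ N, ∀ n ≥ N, fincontent T n = D := by
  have hmem : ∀ x ∈ D, ∃ m, T m = some x := fun x hx => by
    rw [← Finset.mem_coe, ← hT] at hx
    exact hx
  choose! pos hpos using hmem
  refine ⟨D.sup pos + 1, fun n hn => Finset.ext fun x => ⟨fun hx => ?_, fun hx => ?_⟩⟩
  · obtain ⟨m, -, hm⟩ := mem_fincontent.mp hx
    rw [← Finset.mem_coe, ← hT]
    exact ⟨m, hm⟩
  · exact mem_fincontent.mpr ⟨pos x, by have := D.le_sup (f := pos) hx; omega, hpos x hx⟩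

lemma exC_of_eq_fincontent {p : HypSeq} {T : Text} {g : Finset ℕ → ℕ} {D : Finset ℕ}
    (hp : ∀ n, p n = Part.some (g (fincontent T n))) (hT : content T = D)
    (hg : CIndex (g D)) (hgD : Cset (g D) = D) : ExC p T := by
  obtain ⟨N, hN⟩ := eventually_fincontent_eq hT
  refine ⟨N, fun n hn => by rw [hp, hp, hN n hn, hN N le_rfl], g D, ?_, hg, by rw [hgD, hT]⟩
  rw [hp, hN N le_rfl]

lemma cIndRes_of_eq_fincontent {p : HypSeq} {T : Text} {g : Finset ℕ → ℕ}
    (hp : ∀ n, p n = Part.some (g (fincontent T n))) (hg : ∀ D, CIndex (g D)) :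
    CIndRes p T := fun n e he => by
  rw [hp, Part.some_inj] at he
  exact he ▸ hg _

lemma itop_eq_of_step {h : Learner} {g : Finset ℕ → ℕ}
    (hinit : h (encode (none : Option (ℕ × Option ℕ))) = Part.some (g ∅))
    (hstep : ∀ D (o : Option ℕ), h (encode (some (g D, o))) = Part.some (g (D ∪ o.toFinset)))
    (T : Text) (n : ℕ) : Itop h T n = Part.some (g (fincontent T n)) := by
  induction n with
  | zero => exact hinit
  | succ n ih => rw [Itop, ih, Part.bind_some, hstep, fincontent_succ]

lemma tdop_succ_of_eq_some {h : Learner} {T : Text} {n k : ℕ}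
    (hk : h (encode (T n)) = Part.some (k + 1)) : Tdop h T (n + 1) = Part.some k := by
  rw [Tdop, hk, Part.bind_some]

lemma tdop_eq_none_of_ne_some {h : Learner} {T : Text}
    (hT : ∀ n k, h (encode (T n)) ≠ Part.some (k + 1)) (n : ℕ) : Tdop h T n = Part.none := by
  induction n with
  | zero => rfl
  | succ n ih =>
    refine Part.eq_none_iff.mpr fun e he => ?_
    obtain ⟨_ | k, hv, he⟩ := Part.mem_bind_iff.mp he
    · exact Part.notMem_none e (ih ▸ he)
    · exact hT n k (Part.eq_some_iff.mpr hv)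

lemma content_const (x : ℕ) : content (fun _ => some x) = {x} := by
  ext y
  simp [content, eq_comm]

lemma content_alternate (a b : ℕ) :
    content (fun n => some (if n % 2 = 0 then a else b)) = {a, b} := by
  ext y
  simp only [content, Option.some_inj, Set.mem_insert_iff, Set.mem_singleton_iff]
  refine ⟨fun ⟨n, hn⟩ => ?_, ?_⟩
  · split_ifs at hn <;> simp [← hn]
  · rintro (rfl | rfl)
    exacts [⟨0, rfl⟩, ⟨1, rfl⟩]

lemma exists_tdop_output_of_exW_const {h : Learner} {x : ℕ}
    (hx : ExW (Tdop h fun _ => some x) fun _ => some x) :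
    ∃ k, h (encode (some x)) = Part.some (k + 1) ∧ Wset k = {x} := by
  obtain ⟨n, -, e, hn, hW⟩ := hx
  by_cases hk : ∃ k, h (encode (some x)) = Part.some (k + 1)
  · obtain ⟨k, hk⟩ := hk
    obtain _ | n := n
    · exact absurd hn (Part.none_ne_some e)
    · rw [tdop_succ_of_eq_some (T := fun _ => some x) hk, Part.some_inj] at hn
      exact ⟨k, hk, hn ▸ hW.trans (content_const x)⟩
  · simp only [not_exists] at hk
    exact absurd hn (tdop_eq_none_of_ne_some (fun _ => hk) n ▸ Part.none_ne_some e)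

lemma notMem_learnableREC_tdop_exW {C : Learner → Prop} {ℒ : Set (Set ℕ)} {a b : ℕ}
    (hab : a ≠ b) (ha : {a} ∈ ℒ) (hb : {b} ∈ ℒ) (hab' : {a, b} ∈ ℒ) :
    ℒ ∉ LearnableREC C Tdop ExW := by
  rintro ⟨-, h, -, hℒ⟩
  obtain ⟨ka, hka, hWa⟩ := exists_tdop_output_of_exW_const (hℒ _ ha _ (content_const a))
  obtain ⟨kb, hkb, hWb⟩ := exists_tdop_output_of_exW_const (hℒ _ hb _ (content_const b))
  set T : Text := fun n => some (if n % 2 = 0 then a else b)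
  obtain ⟨n, hconv, -⟩ := hℒ _ hab' T (content_alternate a b)
  have hodd : Tdop h T (2 * n + 1) = Part.some ka :=
    tdop_succ_of_eq_some (by simpa [T] using hka)
  have heven : Tdop h T (2 * n + 2) = Part.some kb :=
    tdop_succ_of_eq_some (by simpa [T, Nat.add_mod] using hkb)
  have : ka = kb := Part.some_inj.mp <| by
    rw [← hodd, ← heven, hconv (2 * n + 1) (by omega), hconv (2 * n + 2) (by omega)]
  exact hab (by simpa [this, hWb] using hWa.symm)

def guess (D : Finset ℕ) : Finset ℕ := if D ⊆ {0, 1} then D else {0, 1}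

noncomputable def guessIndex (D : Finset ℕ) : ℕ := finsetIndex (guess D)

lemma guess_subset (D : Finset ℕ) : guess D ⊆ {0, 1} := by
  unfold guess; split_ifs <;> simp [*]

lemma guess_of_subset {D : Finset ℕ} (hD : D ⊆ {0, 1}) : guess D = D := if_pos hD

lemma guess_insert_guess (x : ℕ) (D : Finset ℕ) :
    guess (insert x (guess D)) = guess (insert x D) := by
  by_cases hD : D ⊆ {0, 1}
  · rw [guess_of_subset hD]
  · have : ¬ insert x D ⊆ {0, 1} := fun h => hD ((Finset.subset_insert x D).trans h)
    simp only [guess, hD, this, if_false]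
    split_ifs <;> simp_all [Finset.insert_subset_iff]

noncomputable def insertStep (S : Finset ℕ) (x : ℕ) : ℕ :=
  if x = 0 then guessIndex (insert 0 S)
  else if x = 1 then guessIndex (insert 1 S)
  else guessIndex {0, 1}

lemma insertStep_eq_guessIndex (S : Finset ℕ) (x : ℕ) :
    insertStep S x = guessIndex (insert x S) := by
  unfold insertStep
  split_ifs with h0 h1
  · rw [h0]
  · rw [h1]
  · have : ¬ insert x S ⊆ {0, 1} := by simp [Finset.insert_subset_iff, h0, h1]
    simp [guessIndex, guess, this]

/-- Since `guessIndex` takes only the four values `finsetIndex S` with `S ⊆ {0, 1}`, the guessed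
set can be read back off the current hypothesis. -/
noncomputable def itStep (e x : ℕ) : ℕ :=
  if e = finsetIndex ∅ then insertStep ∅ x
  else if e = finsetIndex {0} then insertStep {0} x
  else if e = finsetIndex {1} then insertStep {1} x
  else insertStep {0, 1} x

lemma itStep_finsetIndex {S : Finset ℕ} (hS : S ⊆ {0, 1}) (x : ℕ) :
    itStep (finsetIndex S) x = insertStep S x := by
  have hS : S ∈ ({∅, {0}, {1}, {0, 1}} : Finset (Finset ℕ)) := by
    rw [← Finset.mem_powerset] at hS
    exact (show ({0, 1} : Finset ℕ).powerset = {∅, {0}, {1}, {0, 1}} by decide) ▸ hS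
  simp only [Finset.mem_insert, Finset.mem_singleton] at hS
  obtain rfl | rfl | rfl | rfl := hS <;> simp +decide [itStep, finsetIndex_injective.eq_iff]

lemma itStep_guessIndex (D : Finset ℕ) (x : ℕ) :
    itStep (guessIndex D) x = guessIndex (insert x D) := by
  rw [guessIndex, itStep_finsetIndex (guess_subset D), insertStep_eq_guessIndex, guessIndex,
    guess_insert_guess, guessIndex]

lemma primrec₂_itStep : Primrec₂ itStep := by
  have hins (S : Finset ℕ) : Primrec₂ fun (_ : ℕ) x => insertStep S x :=
    (Primrec.ite (Primrec.eq.comp .snd (.const 0)) (.const _)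
      (Primrec.ite (Primrec.eq.comp .snd (.const 1)) (.const _) (.const _)))
  exact Primrec.ite (Primrec.eq.comp .fst (.const _)) (hins ∅)
    (Primrec.ite (Primrec.eq.comp .fst (.const _)) (hins {0})
      (Primrec.ite (Primrec.eq.comp .fst (.const _)) (hins {1}) (hins {0, 1})))

noncomputable def itLearner : Learner := fun n =>
  ((decode (α := Option (ℕ × Option ℕ)) n).map fun o =>
    o.elim (guessIndex ∅) fun p => p.2.elim p.1 (itStep p.1) : Part ℕ)

lemma partComputable_itLearner : PartComputable itLearner := by
  have hupd : Primrec fun o : Option (ℕ × Option ℕ) =>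
      o.elim (guessIndex ∅) fun p => p.2.elim p.1 (itStep p.1) :=
    (Primrec.option_casesOn .id (.const _) <| Primrec.to₂ <| Primrec.option_casesOn
      (Primrec.snd.comp .snd) (Primrec.fst.comp .snd)
      (primrec₂_itStep.comp (Primrec.fst.comp (Primrec.snd.comp .fst)) .snd).to₂)
      |>.of_eq fun o => by rcases o with _ | ⟨e, _ | x⟩ <;> rfl
  exact Partrec.nat_iff.mp (Computable.option_map Computable.decode
    (hupd.to_comp.comp .snd).to₂).ofOption

lemma itop_itLearner_eq (T : Text) (n : ℕ) :
    Itop itLearner T n = Part.some (guessIndex (fincontent T n)) := by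
  refine itop_eq_of_step (by rw [itLearner, encodek]; rfl) (fun D o => ?_) T n
  rw [itLearner, encodek]
  cases o <;> simp [itStep_guessIndex]

noncomputable def sdLearner : Learner := fun n =>
  ((decode (α := List ℕ) n).map (List.foldr (fun x e => itStep e x) (guessIndex ∅)) : Part ℕ)

lemma partComputable_sdLearner : PartComputable sdLearner :=
  Partrec.nat_iff.mp (Computable.option_map Computable.decode
    (Primrec.list_foldr .snd (.const _) (primrec₂_itStep.comp (Primrec.snd.comp .snd)
      (Primrec.fst.comp .snd)).to₂).to_comp.to₂).ofOption

lemma foldr_itStep_eq_guessIndex (l : List ℕ) :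
    l.foldr (fun x e => itStep e x) (guessIndex ∅) = guessIndex l.toFinset := by
  induction l with
  | nil => rfl
  | cons x l ih => rw [List.foldr_cons, ih, itStep_guessIndex, List.toFinset_cons]

lemma sdop_sdLearner_eq (T : Text) (n : ℕ) :
    Sdop sdLearner T n = Part.some (guessIndex (fincontent T n)) := by
  simp [Sdop, sdLearner, setCode, foldr_itStep_eq_guessIndex]

lemma recLang_finset (D : Finset ℕ) : RecLang D := by
  obtain ⟨_, hD⟩ := computablePred_mem_finset D
  exact ⟨_, hD, fun x => by simp⟩

lemma mem_tauLearnableREC_of_eq_guessIndex {β : InteractionOp} {h : Learner}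
    (hc : PartComputable h) (hβ : ∀ T n, β h T n = Part.some (guessIndex (fincontent T n))) :
    {{0}, {1}, {0, 1}} ∈ TauLearnableREC PartComputable CIndRes β ExC := by
  have learns {D : Finset ℕ} (hD : D ⊆ {0, 1}) : Learns β ExC h D := fun T hT =>
    exC_of_eq_fincontent (hβ T) hT (cIndex_finsetIndex _)
      (by rw [guessIndex, guess_of_subset hD, cset_finsetIndex])
  refine ⟨?_, h, hc, fun T => cIndRes_of_eq_fincontent (hβ T) fun _ => cIndex_finsetIndex _,
    ?_⟩
  · rintro L (rfl | rfl | rfl)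
    exacts [by simpa using recLang_finset {0}, by simpa using recLang_finset {1},
      by simpa using recLang_finset {0, 1}]
  · rintro L (rfl | rfl | rfl)
    exacts [by simpa using learns (D := {0}) (by decide),
      by simpa using learns (D := {1}) (by decide), by simpa using learns (D := {0, 1}) le_rfl]

/-- For `β ∈ {It, Sd}`: there is a class of recursive languages in
`[τ(CInd)TxtβEx_C]_REC` but not in `[TxtTdEx_W]_REC`. -/
theorem tau_cind_beta_not_td_exW (β : InteractionOp)
    (hβ : β = Itop ∨ β = Sdop) :
    ∃ ℒ : Set (Set ℕ),
      ℒ ∈ TauLearnableREC PartComputable CIndRes β ExC ∧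
      ℒ ∉ LearnableREC PartComputable Tdop ExW := by
  refine ⟨{{0}, {1}, {0, 1}}, ?_,
    notMem_learnableREC_tdop_exW zero_ne_one (by simp) (by simp) (by simp)⟩
  rcases hβ with rfl | rfl
  · exact mem_tauLearnableREC_of_eq_guessIndex partComputable_itLearner itop_itLearner_eq
  · exact mem_tauLearnableREC_of_eq_guessIndex partComputable_sdLearner sdop_sdLearner_eq

end InductiveInference
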